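/- Let q = 0, u ∈ [0,1), i ≥ 1 fixed, α > 0, p = α/K. Then I₂ = Θ((log K)/K); precisely, α·e^{-α}·i·(1-u)/ln 2 ≤ liminf_{K→∞} (K/ln K)·I₂ and limsup_{K→∞} (K/ln K)·I₂ ≤ α·e^{-α(1-u²)}·i·(1-u)/ln 2. -/

import Mathlib

/-!
Put `x = p (1 - u)`, `D_j = 1 - p + p u^j` and `N_j = (1 - x)^j`, so that `0 ≤ N_j ≤ D_j ≤ 1`
(convexity of `t ↦ t^j`) and the `j`-th summand of `I₂` is
`D_j^K (1 - (N_j / D_j)^i) / (j (j - 1))`. Bernoulli's inequality and the Bonferroni bound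
`(1 - y)^n ≤ 1 - n y + C(n,2) y²` give `i j x - i p - O(i² j² p²) ≤ 1 - (N_j / D_j)^i ≤ i j x`,
and `(1 - p)^K ≤ D_j^K ≤ (1 - p (1 - u²))^K` for `j ≥ 2`. So, up to errors that are negligible
for `j ≤ K / log K`, the summand is `i x / (j - 1)` times a factor between
`(1 - α/K)^K → e^{-α}` and `(1 - α (1 - u²)/K)^K → e^{-α (1 - u²)}`. Summing over the first
`⌊K / log K⌋` values of `j` for the lower bound, and over the first `K` plus the tail
`∑_{j > K + 1} 1 / (j (j - 1)) = 1 / (K + 1)` for the upper bound, gives harmonic numbers of size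
`log K (1 + o(1))`.
-/

open Filter

/-- The error term I₂ in the q = 0 case (series index j ≥ 2 as j = m + 2). -/
noncomputable def I2q0 (K i : ℕ) (p u : ℝ) : ℝ :=
  (1 / Real.log 2) *
    ∑' m : ℕ,
      (1 : ℝ) / ((m + 2) * (m + 1)) *
        (1 - p + p * u ^ (m + 2)) ^ K *
        (1 - ((1 - p + p * u) ^ (m + 2) / (1 - p + p * u ^ (m + 2))) ^ i)

open Topology

theorem one_sub_pow_le_one_sub_mul_add_choose_two {x : ℝ} (hx0 : 0 ≤ x) (hx1 : x ≤ 1)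
    (n : ℕ) :
    (1 - x) ^ n ≤ 1 - n * x + n.choose 2 * x ^ 2 := by
  induction n with
  | zero => simp
  | succ n ih =>
    have hc : 0 ≤ (n.choose 2 : ℝ) * x ^ 3 := by positivity
    calc (1 - x) ^ (n + 1) = (1 - x) ^ n * (1 - x) := pow_succ _ _
      _ ≤ (1 - n * x + n.choose 2 * x ^ 2) * (1 - x) := by gcongr
      _ ≤ _ := by
        simp only [Nat.cast_choose_two] at hc ⊢
        push_cast
        nlinarith

theorem one_sub_one_sub_pow_le {x : ℝ} (hx : x ≤ 2) (n : ℕ) : 1 - (1 - x) ^ n ≤ n * x := by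
  have := one_add_mul_le_pow (a := -x) (by linarith) n
  rw [← sub_eq_add_neg] at this
  linarith

section Ratio

variable {N D : ℝ}

theorem one_sub_div_pow_nonneg (hN : 0 ≤ N) (hND : N ≤ D) (hD0 : 0 < D) (i : ℕ) :
    0 ≤ 1 - (N / D) ^ i :=
  sub_nonneg.2 (pow_le_one₀ (div_nonneg hN hD0.le) ((div_le_one hD0).2 hND))

theorem one_sub_div_pow_le (hN : 0 ≤ N) (hD0 : 0 < D) (hD1 : D ≤ 1) (i : ℕ) :
    1 - (N / D) ^ i ≤ i * (1 - N) := by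
  have hr : N ≤ N / D := le_div_self hN hD0 hD1
  have hbern := one_sub_one_sub_pow_le (x := 1 - N / D) (by linarith [div_nonneg hN hD0.le]) i
  rw [sub_sub_cancel] at hbern
  nlinarith [(Nat.cast_nonneg i : (0 : ℝ) ≤ i)]

theorem le_one_sub_div_pow (hN : 0 ≤ N) (hND : N ≤ D) (hD0 : 0 < D) (hD1 : D ≤ 1) (i : ℕ) :
    i * (D - N) - i.choose 2 * (1 - N) ^ 2 ≤ 1 - (N / D) ^ i := by
  set r := N / D
  have hr1 : r ≤ 1 := (div_le_one hD0).2 hND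
  have hrN : N ≤ r := le_div_self hN hD0 hD1
  have hDN : D - N ≤ 1 - r := by
    have hrD : r * D = N := div_mul_cancel₀ N hD0.ne'
    nlinarith [mul_nonneg (sub_nonneg.2 hr1) (sub_nonneg.2 hD1)]
  have hquad :=
    one_sub_pow_le_one_sub_mul_add_choose_two (x := 1 - r) (by linarith) (by linarith) i
  rw [sub_sub_cancel] at hquad
  have hsq : (1 - r) ^ 2 ≤ (1 - N) ^ 2 := pow_le_pow_left₀ (by linarith) (by linarith) 2
  nlinarith [mul_le_mul_of_nonneg_left hsq (Nat.cast_nonneg (α := ℝ) (i.choose 2)),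
    mul_le_mul_of_nonneg_left hDN (Nat.cast_nonneg (α := ℝ) i)]

end Ratio

theorem mul_choose_two_add_choose_two_mul_le (i m : ℕ) {x p : ℝ} (hx0 : 0 ≤ x) (hxp : x ≤ p) :
    i * ((m + 2).choose 2 * x ^ 2) + i.choose 2 * ((m + 2) * x) ^ 2 ≤
      i ^ 2 * p ^ 2 * ((m + 2) * (m + 1)) := by
  have hi : (0 : ℝ) ≤ i * (i - 1) / 2 := by rw [← Nat.cast_choose_two]; positivity
  have hm : (0 : ℝ) ≤ m := Nat.cast_nonneg m
  have hx2 : x ^ 2 ≤ p ^ 2 := pow_le_pow_left₀ hx0 hxp 2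
  rw [Nat.cast_choose_two, Nat.cast_choose_two]
  push_cast
  calc i * ((m + 2) * (m + 2 - 1) / 2 * x ^ 2) + i * (i - 1) / 2 * ((m + 2) * x) ^ 2
      = (m + 2) * x ^ 2 * (i * (m + 1) / 2 + i * (i - 1) / 2 * (m + 2)) := by ring
    _ ≤ (m + 2) * x ^ 2 * (i * (m + 1) / 2 + i * (i - 1) / 2 * (2 * (m + 1))) := by
      gcongr
      linarith
    _ = (m + 2) * (m + 1) * x ^ 2 * (i ^ 2 - i / 2) := by ring
    _ ≤ (m + 2) * (m + 1) * p ^ 2 * i ^ 2 := by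
      gcongr
      · nlinarith
      · linarith [Nat.cast_nonneg (α := ℝ) i]
    _ = i ^ 2 * p ^ 2 * ((m + 2) * (m + 1)) := by ring

theorem pow_le_one_sub_add_mul_pow {p u : ℝ} (hp0 : 0 ≤ p) (hp1 : p ≤ 1) (hu : 0 ≤ u) (j : ℕ) :
    (1 - p + p * u) ^ j ≤ 1 - p + p * u ^ j := by
  simpa [smul_eq_mul] using
    (convexOn_pow j).2 (Set.mem_Ici.2 zero_le_one) hu (sub_nonneg.2 hp1) hp0 (by ring)

theorem hasSum_one_div_add_two_mul_add_one (M : ℕ) :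
    HasSum (fun m : ℕ => (1 : ℝ) / ((m + M + 2) * (m + M + 1))) (1 / (M + 1)) := by
  rw [hasSum_iff_tendsto_nat_of_nonneg (fun m => by positivity)]
  have hpartial (n : ℕ) : ∑ m ∈ Finset.range n, (1 : ℝ) / ((m + M + 2) * (m + M + 1)) =
      1 / (M + 1) - 1 / (n + M + 1) := by
    induction n with
    | zero => simp
    | succ n ih =>
      rw [Finset.sum_range_succ, ih]
      push_cast
      field_simp
      ring
  simp_rw [hpartial]
  have : Tendsto (fun n : ℕ => (1 : ℝ) / (n + M + 1)) atTop (𝓝 0) :=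
    tendsto_const_nhds.div_atTop (tendsto_atTop_add_const_right _ _
      (tendsto_atTop_add_const_right _ _ tendsto_natCast_atTop_atTop))
  simpa using (tendsto_const_nhds (x := (1 : ℝ) / (M + 1))).sub this

theorem sum_range_one_div_add_two_mul_add_one_le_one (M : ℕ) :
    ∑ m ∈ Finset.range M, (1 : ℝ) / ((m + 2) * (m + 1)) ≤ 1 := by
  simpa using sum_le_hasSum (Finset.range M) (fun m _ => by positivity)
    (hasSum_one_div_add_two_mul_add_one 0)

theorem harmonic_eq_sum_range (n : ℕ) :
    (harmonic n : ℝ) = ∑ m ∈ Finset.range n, (1 : ℝ) / (m + 1) := by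
  simp [harmonic]

noncomputable def I2q0Term (K i : ℕ) (p u : ℝ) (m : ℕ) : ℝ :=
  (1 : ℝ) / ((m + 2) * (m + 1)) * (1 - p + p * u ^ (m + 2)) ^ K *
    (1 - ((1 - p + p * u) ^ (m + 2) / (1 - p + p * u ^ (m + 2))) ^ i)

theorem I2q0_eq_tsum (K i : ℕ) (p u : ℝ) :
    I2q0 K i p u = 1 / Real.log 2 * ∑' m, I2q0Term K i p u m := rfl

section Term

variable {p u : ℝ} (K i m : ℕ)

theorem pow_one_sub_add_mul_bounds (hp0 : 0 ≤ p) (hp1 : p < 1) (hu0 : 0 ≤ u) (hu1 : u ≤ 1)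
    (j : ℕ) :
    0 ≤ (1 - p + p * u) ^ j ∧ (1 - p + p * u) ^ j ≤ 1 - p + p * u ^ j ∧
      0 < 1 - p + p * u ^ j ∧ 1 - p + p * u ^ j ≤ 1 := by
  have huj : u ^ j ≤ 1 := pow_le_one₀ hu0 hu1
  refine ⟨pow_nonneg (by nlinarith) j, pow_le_one_sub_add_mul_pow hp0 hp1.le hu0 j,
    by nlinarith [pow_nonneg hu0 j], by nlinarith⟩

theorem I2q0Term_nonneg (hp0 : 0 ≤ p) (hp1 : p < 1) (hu0 : 0 ≤ u) (hu1 : u ≤ 1) :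
    0 ≤ I2q0Term K i p u m := by
  obtain ⟨hN, hND, hD0, -⟩ := pow_one_sub_add_mul_bounds hp0 hp1 hu0 hu1 (m + 2)
  have := one_sub_div_pow_nonneg hN hND hD0 i
  unfold I2q0Term
  positivity

theorem I2q0Term_le_one_div (hp0 : 0 ≤ p) (hp1 : p < 1) (hu0 : 0 ≤ u) (hu1 : u ≤ 1) :
    I2q0Term K i p u m ≤ 1 / ((m + 2) * (m + 1)) := by
  obtain ⟨hN, hND, hD0, hD1⟩ := pow_one_sub_add_mul_bounds hp0 hp1 hu0 hu1 (m + 2)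
  have hDK : (1 - p + p * u ^ (m + 2)) ^ K ≤ 1 := pow_le_one₀ hD0.le hD1
  unfold I2q0Term
  rw [mul_assoc]
  refine mul_le_of_le_one_right (by positivity) ?_
  nlinarith [pow_nonneg hD0.le K, pow_nonneg (div_nonneg hN hD0.le) i]

theorem I2q0Term_le (hp0 : 0 ≤ p) (hp1 : p < 1) (hu0 : 0 ≤ u) (hu1 : u ≤ 1) :
    I2q0Term K i p u m ≤ (1 - p * (1 - u ^ 2)) ^ K * (i * (p * (1 - u)) / (m + 1)) := by
  obtain ⟨hN, hND, hD0, hD1⟩ := pow_one_sub_add_mul_bounds hp0 hp1 hu0 hu1 (m + 2)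
  have hbern : 1 - (1 - p + p * u) ^ (m + 2) ≤ (m + 2) * (p * (1 - u)) := by
    have := one_sub_one_sub_pow_le (x := p * (1 - u)) (by nlinarith) (m + 2)
    rw [show 1 - p * (1 - u) = 1 - p + p * u by ring] at this
    exact_mod_cast this
  have hD : 1 - p + p * u ^ (m + 2) ≤ 1 - p * (1 - u ^ 2) := by
    nlinarith [pow_le_pow_of_le_one hu0 hu1 (show 2 ≤ m + 2 by omega)]
  have hE : 0 ≤ 1 - p * (1 - u ^ 2) := hD0.le.trans hD
  calc I2q0Term K i p u m
      ≤ 1 / ((m + 2) * (m + 1)) * (1 - p * (1 - u ^ 2)) ^ K *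
          (i * ((m + 2) * (p * (1 - u)))) :=
        mul_le_mul (by gcongr) ((one_sub_div_pow_le hN hD0 hD1 i).trans (by gcongr))
          (one_sub_div_pow_nonneg hN hND hD0 i) (by positivity)
    _ = (1 - p * (1 - u ^ 2)) ^ K * (i * (p * (1 - u)) / (m + 1)) := by
        field_simp

theorem le_one_sub_ratio_pow_div (hp0 : 0 ≤ p) (hp1 : p < 1) (hu0 : 0 ≤ u) (hu1 : u ≤ 1) :
    i * (p * (1 - u) / (m + 1) - p / ((m + 2) * (m + 1)) - i * p ^ 2) ≤
      (1 - ((1 - p + p * u) ^ (m + 2) / (1 - p + p * u ^ (m + 2))) ^ i) /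
        ((m + 2) * (m + 1)) := by
  obtain ⟨hN, hND, hD0, hD1⟩ := pow_one_sub_add_mul_bounds hp0 hp1 hu0 hu1 (m + 2)
  set x := p * (1 - u)
  have hx0 : 0 ≤ x := mul_nonneg hp0 (by linarith)
  rw [show 1 - p + p * u = 1 - x by ring] at hN hND ⊢
  set N := (1 - x) ^ (m + 2)
  set D := 1 - p + p * u ^ (m + 2)
  have hquad := one_sub_pow_le_one_sub_mul_add_choose_two hx0 (by nlinarith) (m + 2)
  have hbern := one_sub_one_sub_pow_le (x := x) (by nlinarith) (m + 2)
  have hDN : (m + 2) * x - (m + 2).choose 2 * x ^ 2 - p ≤ D - N := by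
    push_cast at hquad ⊢
    nlinarith [pow_nonneg hu0 (m + 2)]
  have hsq : (1 - N) ^ 2 ≤ ((m + 2) * x) ^ 2 :=
    pow_le_pow_left₀ (by linarith) (by exact_mod_cast hbern) 2
  have herr := mul_choose_two_add_choose_two_mul_le i m hx0 (show x ≤ p by nlinarith)
  rw [le_div_iff₀ (by positivity)]
  calc i * (x / (m + 1) - p / ((m + 2) * (m + 1)) - i * p ^ 2) * ((m + 2) * (m + 1))
      = i * ((m + 2) * x - p) - i ^ 2 * p ^ 2 * ((m + 2) * (m + 1)) := by
        field_simp
    _ ≤ i * (D - N) - i.choose 2 * (1 - N) ^ 2 := by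
        nlinarith [mul_le_mul_of_nonneg_left hDN (Nat.cast_nonneg (α := ℝ) i),
          mul_le_mul_of_nonneg_left hsq (Nat.cast_nonneg (α := ℝ) (i.choose 2))]
    _ ≤ 1 - (N / D) ^ i := le_one_sub_div_pow hN hND hD0 hD1 i

theorem le_I2q0Term (hp0 : 0 ≤ p) (hp1 : p < 1) (hu0 : 0 ≤ u) (hu1 : u ≤ 1) :
    (1 - p) ^ K * (i * (p * (1 - u) / (m + 1) - p / ((m + 2) * (m + 1)) - i * p ^ 2)) ≤
      I2q0Term K i p u m := by
  obtain ⟨hN, hND, hD0, -⟩ := pow_one_sub_add_mul_bounds hp0 hp1 hu0 hu1 (m + 2)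
  have hr := one_sub_div_pow_nonneg hN hND hD0 i
  have hterm : I2q0Term K i p u m = (1 - p + p * u ^ (m + 2)) ^ K *
      ((1 - ((1 - p + p * u) ^ (m + 2) / (1 - p + p * u ^ (m + 2))) ^ i) /
        ((m + 2) * (m + 1))) := by
    unfold I2q0Term
    ring
  rw [hterm]
  rcases le_or_gt (i * (p * (1 - u) / (m + 1) - p / ((m + 2) * (m + 1)) - i * p ^ 2)) 0
    with hc | hc
  · exact (mul_nonpos_of_nonneg_of_nonpos (pow_nonneg (by linarith) K) hc).trans (by positivity)
  · have hDp : 1 - p ≤ 1 - p + p * u ^ (m + 2) := by nlinarith [pow_nonneg hu0 (m + 2)]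
    exact mul_le_mul (pow_le_pow_left₀ (by linarith) hDp K)
      (le_one_sub_ratio_pow_div i m hp0 hp1 hu0 hu1) hc.le (pow_nonneg hD0.le K)

end Term

section Sum

variable {p u : ℝ} (K i : ℕ)

theorem summable_I2q0Term (hp0 : 0 ≤ p) (hp1 : p < 1) (hu0 : 0 ≤ u) (hu1 : u ≤ 1) :
    Summable (I2q0Term K i p u) :=
  Summable.of_nonneg_of_le (fun m => I2q0Term_nonneg K i m hp0 hp1 hu0 hu1)
    (fun m => I2q0Term_le_one_div K i m hp0 hp1 hu0 hu1)
    (by simpa using (hasSum_one_div_add_two_mul_add_one 0).summable)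

theorem tsum_I2q0Term_le (hp0 : 0 ≤ p) (hp1 : p < 1) (hu0 : 0 ≤ u) (hu1 : u ≤ 1) (M : ℕ) :
    ∑' m, I2q0Term K i p u m ≤
      (1 - p * (1 - u ^ 2)) ^ K * (i * (p * (1 - u))) * harmonic M + 1 / (M + 1) := by
  have hs := summable_I2q0Term K i hp0 hp1 hu0 hu1
  rw [← hs.sum_add_tsum_nat_add M]
  gcongr
  · rw [harmonic_eq_sum_range, Finset.mul_sum]
    refine Finset.sum_le_sum fun m _ => (I2q0Term_le K i m hp0 hp1 hu0 hu1).trans_eq ?_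
    ring
  · refine hasSum_le (fun m => ?_) ((summable_nat_add_iff M).2 hs).hasSum
      (hasSum_one_div_add_two_mul_add_one M)
    simpa [add_assoc] using I2q0Term_le_one_div K i (m + M) hp0 hp1 hu0 hu1

theorem le_tsum_I2q0Term (hp0 : 0 ≤ p) (hp1 : p < 1) (hu0 : 0 ≤ u) (hu1 : u ≤ 1) (M : ℕ) :
    (1 - p) ^ K * (i * p * ((1 - u) * harmonic M - 1 - i * M * p)) ≤
      ∑' m, I2q0Term K i p u m := by
  have hS := sum_range_one_div_add_two_mul_add_one_le_one M
  have hpK : 0 ≤ (1 - p) ^ K := pow_nonneg (by linarith) K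
  calc (1 - p) ^ K * (i * p * ((1 - u) * harmonic M - 1 - i * M * p))
      ≤ (1 - p) ^ K * (i * (p * (1 - u) * harmonic M
          - p * ∑ m ∈ Finset.range M, (1 : ℝ) / ((m + 2) * (m + 1)) - M * (i * p ^ 2))) := by
        refine mul_le_mul_of_nonneg_left ?_ hpK
        nlinarith [mul_nonneg (Nat.cast_nonneg (α := ℝ) i)
          (sub_nonneg.2 (mul_le_mul_of_nonneg_left hS hp0))]
    _ = ∑ m ∈ Finset.range M,
          (1 - p) ^ K * (i * (p * (1 - u) / (m + 1) - p / ((m + 2) * (m + 1)) - i * p ^ 2)) := by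
        rw [← Finset.mul_sum, ← Finset.mul_sum, Finset.sum_sub_distrib, Finset.sum_sub_distrib,
          Finset.sum_const, Finset.card_range, nsmul_eq_mul, harmonic_eq_sum_range,
          Finset.mul_sum, Finset.mul_sum]
        simp only [mul_one_div]
    _ ≤ ∑ m ∈ Finset.range M, I2q0Term K i p u m :=
        Finset.sum_le_sum fun m _ => le_I2q0Term K i m hp0 hp1 hu0 hu1
    _ ≤ ∑' m, I2q0Term K i p u m :=
        (summable_I2q0Term K i hp0 hp1 hu0 hu1).sum_le_tsum _
          fun m _ => I2q0Term_nonneg K i m hp0 hp1 hu0 hu1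

end Sum

theorem le_liminf_and_limsup_le_of_squeeze {ι : Type*} {l : Filter ι} [l.NeBot]
    {f g h : ι → ℝ} {a b : ℝ} (hg : Tendsto g l (𝓝 a)) (hh : Tendsto h l (𝓝 b))
    (hgf : g ≤ᶠ[l] f) (hfh : f ≤ᶠ[l] h) :
    a ≤ liminf f l ∧ limsup f l ≤ b := by
  have hf_le : IsBoundedUnder (· ≤ ·) l f := hh.isBoundedUnder_le.mono_le hfh
  have hf_ge : IsBoundedUnder (· ≥ ·) l f := hg.isBoundedUnder_ge.mono_ge hgf
  constructor
  · rw [← hg.liminf_eq]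
    exact liminf_le_liminf hgf hg.isBoundedUnder_ge hf_le.isCoboundedUnder_ge
  · rw [← hh.limsup_eq]
    exact limsup_le_limsup hfh hf_ge.isCoboundedUnder_le hh.isBoundedUnder_le

theorem log_sub_log_log_le_harmonic_floor {x : ℝ} (hx : 1 < x) :
    Real.log x - Real.log (Real.log x) ≤ harmonic ⌊x / Real.log x⌋₊ := by
  have hlog : 0 < Real.log x := Real.log_pos hx
  calc Real.log x - Real.log (Real.log x) = Real.log (x / Real.log x) :=
        (Real.log_div (by linarith) hlog.ne').symm
    _ ≤ Real.log ↑(⌊x / Real.log x⌋₊ + 1) := by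
        gcongr
        push_cast
        exact (Nat.lt_floor_add_one _).le
    _ ≤ harmonic ⌊x / Real.log x⌋₊ := log_add_one_le_harmonic _

theorem tendsto_log_log_div_log :
    Tendsto (fun x : ℝ => Real.log (Real.log x) / Real.log x) atTop (𝓝 0) :=
  Real.isLittleO_log_id_atTop.tendsto_div_nhds_zero.comp Real.tendsto_log_atTop

section Asymptotics

variable (i : ℕ) {u α : ℝ}

theorem le_scaled_I2q0 (hu0 : 0 ≤ u) (hu1 : u ≤ 1) (hα : 0 ≤ α) {K : ℕ} (hKα : α < K)
    (hK : 1 < K) :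
    (1 - α / K) ^ K * (i * α * ((1 - u) * (1 - Real.log (Real.log K) / Real.log K)
      - 1 / Real.log K - i * α * (1 / Real.log K) ^ 2)) / Real.log 2 ≤
      K / Real.log K * I2q0 K i (α / K) u := by
  have hK1 : (1 : ℝ) < K := by exact_mod_cast hK
  have hK0 : (0 : ℝ) < K := by linarith
  set L := Real.log K
  have hL : 0 < L := Real.log_pos hK1
  set p := α / K with hp_def
  have hp0 : 0 ≤ p := by positivity
  have hp1 : p < 1 := (div_lt_one hK0).2 hKα
  set M := ⌊(K : ℝ) / L⌋₊
  have hH : L - Real.log L ≤ harmonic M := log_sub_log_log_le_harmonic_floor hK1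
  have hMp : M * p ≤ α / L := by
    calc M * p ≤ K / L * p := by gcongr; exact Nat.floor_le (by positivity)
      _ = α / L := by rw [hp_def]; field_simp
  have hpK : 0 ≤ (1 - p) ^ K := pow_nonneg (by linarith) K
  have hu : 0 ≤ 1 - u := by linarith
  calc (1 - p) ^ K * (i * α * ((1 - u) * (1 - Real.log L / L) - 1 / L - i * α * (1 / L) ^ 2))
        / Real.log 2
      = (1 - p) ^ K * (i * α * ((1 - u) * ((L - Real.log L) / L) - 1 / L - i * (α / L) / L))
        / Real.log 2 := by
        field_simp
    _ ≤ (1 - p) ^ K * (i * α * ((1 - u) * (harmonic M / L) - 1 / L - i * (M * p) / L))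
        / Real.log 2 := by
        gcongr
    _ = K / L * (1 / Real.log 2 *
          ((1 - p) ^ K * (i * p * ((1 - u) * harmonic M - 1 - i * M * p)))) := by
        rw [hp_def]
        field_simp
    _ ≤ K / L * I2q0 K i p u := by
        rw [I2q0_eq_tsum]
        gcongr
        exact le_tsum_I2q0Term K i hp0 hp1 hu0 hu1 M

theorem scaled_I2q0_le (hu0 : 0 ≤ u) (hu1 : u ≤ 1) (hα : 0 ≤ α) {K : ℕ} (hKα : α < K)
    (hK : 1 < K) :
    K / Real.log K * I2q0 K i (α / K) u ≤
      ((1 - α * (1 - u ^ 2) / K) ^ K * (i * (α * (1 - u))) * (1 + 1 / Real.log K)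
        + 1 / Real.log K) / Real.log 2 := by
  have hK1 : (1 : ℝ) < K := by exact_mod_cast hK
  have hK0 : (0 : ℝ) < K := by linarith
  set L := Real.log K
  have hL : 0 < L := Real.log_pos hK1
  set p := α / K with hp_def
  have hp0 : 0 ≤ p := by positivity
  have hp1 : p < 1 := (div_lt_one hK0).2 hKα
  have hE : 1 - p * (1 - u ^ 2) = 1 - α * (1 - u ^ 2) / K := by rw [hp_def, div_mul_eq_mul_div]
  have hE0 : 0 ≤ 1 - p * (1 - u ^ 2) := by nlinarith [pow_le_one₀ hu0 hu1 (n := 2)]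
  have hH : (harmonic K : ℝ) / L ≤ 1 + 1 / L := by
    rw [div_le_iff₀ hL]
    field_simp
    linarith [harmonic_le_one_add_log K]
  calc K / L * I2q0 K i p u
      ≤ K / L * (1 / Real.log 2 *
        ((1 - p * (1 - u ^ 2)) ^ K * (i * (p * (1 - u))) * harmonic K + 1 / (K + 1))) := by
        rw [I2q0_eq_tsum]
        gcongr
        exact tsum_I2q0Term_le K i hp0 hp1 hu0 hu1 K
    _ = ((1 - p * (1 - u ^ 2)) ^ K * (i * (α * (1 - u))) * (harmonic K / L)
        + K / (K + 1) / L) / Real.log 2 := by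
        rw [hp_def]
        field_simp
    _ ≤ _ := by
        rw [← hE]
        gcongr
        exact (div_le_one (by positivity)).2 (by linarith)

theorem exists_tendsto_le_scaled_I2q0 (hu0 : 0 ≤ u) (hu1 : u ≤ 1) (hα : 0 ≤ α) :
    ∃ g : ℕ → ℝ, Tendsto g atTop (𝓝 (α * Real.exp (-α) * i * (1 - u) / Real.log 2)) ∧
      g ≤ᶠ[atTop] fun K : ℕ => (K / Real.log K) * I2q0 K i (α / K) u := by
  refine ⟨_, ?_, ((tendsto_natCast_atTop_atTop.eventually_gt_atTop α).and
    (eventually_gt_atTop 1)).mono fun K hK => le_scaled_I2q0 i hu0 hu1 hα hK.1 hK.2⟩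
  have hε : Tendsto (fun K : ℕ => 1 / Real.log K) atTop (𝓝 0) :=
    tendsto_const_nhds.div_atTop (Real.tendsto_log_atTop.comp tendsto_natCast_atTop_atTop)
  have hδ : Tendsto (fun K : ℕ => Real.log (Real.log K) / Real.log K) atTop (𝓝 0) :=
    tendsto_log_log_div_log.comp tendsto_natCast_atTop_atTop
  have hexp : Tendsto (fun K : ℕ => (1 - α / K) ^ K) atTop (𝓝 (Real.exp (-α))) := by
    refine (Real.tendsto_one_add_div_pow_exp _).congr fun K => ?_
    ring
  have hbracket := (((hδ.const_sub 1).const_mul (1 - u)).sub hε).sub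
    ((hε.pow 2).const_mul ((i : ℝ) * α))
  convert (hexp.mul (hbracket.const_mul ((i : ℝ) * α))).div_const (Real.log 2) using 2
  simp only [sub_zero, mul_one, zero_pow two_ne_zero, mul_zero]
  ring

theorem exists_tendsto_ge_scaled_I2q0 (hu0 : 0 ≤ u) (hu1 : u ≤ 1) (hα : 0 ≤ α) :
    ∃ h : ℕ → ℝ,
      Tendsto h atTop (𝓝 (α * Real.exp (-α * (1 - u ^ 2)) * i * (1 - u) / Real.log 2)) ∧
      (fun K : ℕ => (K / Real.log K) * I2q0 K i (α / K) u) ≤ᶠ[atTop] h := by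
  refine ⟨_, ?_, ((tendsto_natCast_atTop_atTop.eventually_gt_atTop α).and
    (eventually_gt_atTop 1)).mono fun K hK => scaled_I2q0_le i hu0 hu1 hα hK.1 hK.2⟩
  have hε : Tendsto (fun K : ℕ => 1 / Real.log K) atTop (𝓝 0) :=
    tendsto_const_nhds.div_atTop (Real.tendsto_log_atTop.comp tendsto_natCast_atTop_atTop)
  have hexp : Tendsto (fun K : ℕ => (1 - α * (1 - u ^ 2) / K) ^ K) atTop
      (𝓝 (Real.exp (-α * (1 - u ^ 2)))) := by
    refine (Real.tendsto_one_add_div_pow_exp _).congr fun K => ?_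
    ring
  convert ((hexp.mul_const _).mul (hε.const_add 1)).add hε |>.div_const (Real.log 2) using 2
  ring

end Asymptotics

theorem I2_q0_liminf_limsup_general (i : ℕ) (u α : ℝ)
    (hu : u ∈ Set.Ico (0:ℝ) 1) (hα : 0 < α) :
    α * Real.exp (-α) * i * (1 - u) / Real.log 2 ≤
        liminf (fun K : ℕ => ((K : ℝ) / Real.log K) * I2q0 K i (α / K) u) atTop
    ∧ limsup (fun K : ℕ => ((K : ℝ) / Real.log K) * I2q0 K i (α / K) u) atTop ≤
        α * Real.exp (-α * (1 - u ^ 2)) * i * (1 - u) / Real.log 2 := by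
  obtain ⟨hu0, hu1⟩ := hu
  obtain ⟨g, hg, hgF⟩ := exists_tendsto_le_scaled_I2q0 i hu0 hu1.le hα.le
  obtain ⟨h, hh, hFh⟩ := exists_tendsto_ge_scaled_I2q0 i hu0 hu1.le hα.le
  exact le_liminf_and_limsup_le_of_squeeze hg hh hgF hFh

/-- For q = 0, p = α/K: I₂ = Θ((log K)/K); precisely
α e^{-α} i (1-u)/ln 2 ≤ liminf (K/ln K)·I₂ and
limsup (K/ln K)·I₂ ≤ α e^{-α(1-u²)} i (1-u)/ln 2. -/
theorem I2_q0_liminf_limsup (i : ℕ) (hi : 1 ≤ i) (u α : ℝ)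
    (hu : u ∈ Set.Ico (0:ℝ) 1) (hα : 0 < α) :
    α * Real.exp (-α) * i * (1 - u) / Real.log 2 ≤
        liminf (fun K : ℕ => ((K : ℝ) / Real.log K) * I2q0 K i (α / K) u) atTop
    ∧ limsup (fun K : ℕ => ((K : ℝ) / Real.log K) * I2q0 K i (α / K) u) atTop ≤
        α * Real.exp (-α * (1 - u ^ 2)) * i * (1 - u) / Real.log 2 :=
  I2_q0_liminf_limsup_general i u α hu hα
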